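/- An entire function f of finite order solves the differential equation f‴(z) − (3 + e^z) f″(z) + (3 + 2e^z) f′(z) − (1 + e^z) f(z) = 0 if and only if there exist constants c_1, c_2 ∈ ℂ such that f(z) = (c_1 + c_2 z) e^{z} for all z ∈ ℂ. -/

import Mathlib

open Filter Polynomial

noncomputable def maxMod (f : ℂ → ℂ) (r : ℝ) : ℝ :=
  sSup ((fun z => ‖f z‖) '' Metric.sphere (0 : ℂ) r)

/-- The order of growth `ρ(f) = limsup_{r→∞} log log M(r,f) / log r`, as an extended real. -/
noncomputable def growthOrder (f : ℂ → ℂ) : EReal :=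
  Filter.limsup (fun r : ℝ => ((Real.log (Real.log (maxMod f r)) / Real.log r : ℝ) : EReal))
    Filter.atTop

/-- `limsup_{r→∞} log M(r,f) / r`, used to express "mean type". -/
noncomputable def typeLimsup (f : ℂ → ℂ) : EReal :=
  Filter.limsup (fun r : ℝ => ((Real.log (maxMod f r) / r : ℝ) : EReal)) Filter.atTop

/-!
The operator factors as `(D - 1 - eᶻ)(D - 1)²`, so `h = f'' - 2f' + f` solves
`h' = (1 + eᶻ) h`, i.e. `h = h(0) exp (z + eᶻ - 1)`. If `h(0) ≠ 0`, Cauchy's estimates give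
`|h(x)| ≤ 4 M(x + 2, f)` on the positive real axis, so `M(r, f) ≥ exp (exp (r - 2))` for large `r`
and `f` has infinite order. Hence `(D - 1)² f = 0`, whose solutions are the `(c₁ + c₂ z) eᶻ`.
-/

section MaxModulus

variable {f : ℂ → ℂ}

theorem norm_le_maxMod_norm (hf : Continuous f) (z : ℂ) : ‖f z‖ ≤ maxMod f ‖z‖ :=
  le_csSup ((isCompact_sphere 0 _).image (continuous_norm.comp hf)).bddAbove
    ⟨z, by simp, rfl⟩

theorem norm_le_maxMod (hf : Differentiable ℂ f) {z : ℂ} {R : ℝ} (hz : ‖z‖ ≤ R) :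
    ‖f z‖ ≤ maxMod f R := by
  obtain rfl | hlt := hz.eq_or_lt
  · exact norm_le_maxMod_norm hf.continuous z
  have hR : 0 < R := (norm_nonneg z).trans_lt hlt
  refine Complex.norm_le_of_forall_mem_frontier_norm_le Metric.isBounded_ball hf.diffContOnCl
    (fun w hw => ?_) (subset_closure (mem_ball_zero_iff.mpr hlt))
  rw [frontier_ball 0 hR.ne', mem_sphere_zero_iff_norm] at hw
  exact hw ▸ norm_le_maxMod_norm hf.continuous w

theorem Differentiable.hasDerivAt_iteratedDeriv (hf : Differentiable ℂ f) (n : ℕ) (z : ℂ) :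
    HasDerivAt (iteratedDeriv n f) (iteratedDeriv (n + 1) f z) z :=
  iteratedDeriv_succ (f := f) ▸
    (hf.contDiff.differentiable_iteratedDeriv n (WithTop.coe_lt_top _) z).hasDerivAt

theorem norm_iteratedDeriv_le_maxMod (hf : Differentiable ℂ f) (n : ℕ) {z : ℂ} {R : ℝ}
    (hz : ‖z‖ + n ≤ R) : ‖iteratedDeriv n f z‖ ≤ maxMod f R := by
  induction n generalizing z with
  | zero => simpa using norm_le_maxMod hf (by simpa using hz)
  | succ n ih =>
    rw [iteratedDeriv_succ]
    refine div_one (maxMod f R) ▸ Complex.norm_deriv_le_of_forall_mem_sphere_norm_le one_pos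
      (Differentiable.diffContOnCl fun w => (hf.hasDerivAt_iteratedDeriv n w).differentiableAt)
      fun w hw => ih ?_
    rw [mem_sphere_iff_norm] at hw
    have := norm_le_norm_add_norm_sub' w z
    push_cast at hz
    linarith

theorem norm_iteratedDeriv_two_sub_two_deriv_add_le (hf : Differentiable ℂ f) (z : ℂ) :
    ‖iteratedDeriv 2 f z - 2 * deriv f z + f z‖ ≤ 4 * maxMod f (‖z‖ + 2) := by
  have h2 := norm_iteratedDeriv_le_maxMod hf 2 (le_refl (‖z‖ + 2))
  have h1 := norm_iteratedDeriv_le_maxMod hf 1 (z := z) (R := ‖z‖ + 2) (by push_cast; linarith)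
  have h0 := norm_iteratedDeriv_le_maxMod hf 0 (z := z) (R := ‖z‖ + 2) (by push_cast; linarith)
  rw [iteratedDeriv_one] at h1
  rw [iteratedDeriv_zero] at h0
  calc ‖iteratedDeriv 2 f z - 2 * deriv f z + f z‖
      ≤ ‖iteratedDeriv 2 f z‖ + 2 * ‖deriv f z‖ + ‖f z‖ := by
        refine (norm_add_le _ _).trans (add_le_add_left ((norm_sub_le _ _).trans ?_) _)
        rw [norm_mul, Complex.norm_ofNat]
    _ ≤ 4 * maxMod f (‖z‖ + 2) := by linarith

end MaxModulus

theorem eventually_mul_log_lt_sub (K a : ℝ) : ∀ᶠ r in atTop, K * Real.log r < r - a := by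
  filter_upwards [(Real.isLittleO_log_id_atTop.const_mul_left K).bound one_half_pos,
    eventually_gt_atTop (max (2 * a) 0)] with r hlog hr
  rw [max_lt_iff] at hr
  rw [Real.norm_eq_abs, id, Real.norm_of_nonneg hr.2.le] at hlog
  linarith [le_abs_self (K * Real.log r)]

theorem growthOrder_eq_top_of_exp_exp_le {f : ℂ → ℂ} {a : ℝ}
    (h : ∀ᶠ r in atTop, Real.exp (Real.exp (r - a)) ≤ maxMod f r) : growthOrder f = ⊤ := by
  by_contra hfin
  obtain ⟨K, hK, -⟩ := EReal.lt_iff_exists_real_btwn.mp (lt_top_iff_ne_top.mpr hfin)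
  obtain ⟨r, hr, hM, hKr, hr1⟩ := ((eventually_lt_of_limsup_lt hK).and
    (h.and ((eventually_mul_log_lt_sub K a).and (eventually_gt_atTop 1)))).exists
  have hlog : 0 < Real.log r := Real.log_pos hr1
  have hM0 : 0 < maxMod f r := (Real.exp_pos _).trans_le hM
  have hlogM : Real.exp (r - a) ≤ Real.log (maxMod f r) := (Real.le_log_iff_exp_le hM0).mpr hM
  have hloglog : r - a ≤ Real.log (Real.log (maxMod f r)) :=
    (Real.le_log_iff_exp_le ((Real.exp_pos _).trans_le hlogM)).mpr hlogM
  rw [EReal.coe_lt_coe_iff, div_lt_iff₀ hlog] at hr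
  linarith

open Complex in
theorem eventually_exp_exp_le_maxMod {f : ℂ → ℂ} (hf : Differentiable ℂ f) {C : ℂ} (hC : C ≠ 0)
    (h : ∀ z, iteratedDeriv 2 f z - 2 * deriv f z + f z = C * exp (z + exp z - 1)) :
    ∀ᶠ r in atTop, Real.exp (Real.exp (r - 2)) ≤ maxMod f r := by
  have hC4 : 0 < ‖C‖ / 4 := by positivity
  filter_upwards [eventually_ge_atTop (3 - Real.log (‖C‖ / 4)), eventually_ge_atTop 2]
    with r hr hr2
  have hx : ‖((r - 2 : ℝ) : ℂ)‖ = r - 2 := Complex.norm_of_nonneg (by linarith)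
  calc Real.exp (Real.exp (r - 2))
      ≤ Real.exp (Real.log (‖C‖ / 4) + (r - 2 + Real.exp (r - 2) - 1)) :=
        Real.exp_le_exp.mpr (by linarith)
    _ = ‖C * exp ((r - 2 : ℝ) + exp (r - 2 : ℝ) - 1)‖ / 4 := by
        rw [Real.exp_add, Real.exp_log hC4, norm_mul, norm_exp, ← ofReal_exp]
        norm_cast
        ring
    _ ≤ maxMod f r := by
        have := norm_iteratedDeriv_two_sub_two_deriv_add_le hf (r - 2 : ℝ)
        rw [hx, sub_add_cancel, h] at this
        linarith

section LinearODE

open Complex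

theorem eq_mul_exp_sub_of_hasDerivAt {u φ φ' : ℂ → ℂ} (hφ : ∀ z, HasDerivAt φ (φ' z) z)
    (hu : ∀ z, HasDerivAt u (φ' z * u z) z) (z : ℂ) : u z = u 0 * exp (φ z - φ 0) := by
  have hψ : ∀ w, HasDerivAt (fun w => u w * exp (-φ w)) 0 w := fun w =>
    ((hu w).mul (hφ w).neg.cexp).congr_deriv (by ring)
  have hconst := is_const_of_deriv_eq_zero (fun w => (hψ w).differentiableAt)
    (fun w => (hψ w).deriv) z 0
  calc u z = u z * exp (-φ z) * exp (φ z) := by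
        rw [mul_assoc, ← exp_add, neg_add_cancel, exp_zero, mul_one]
    _ = u 0 * exp (φ z - φ 0) := by rw [hconst, mul_assoc, ← exp_add, neg_add_eq_sub]

theorem eq_affine_mul_exp_of_hasDerivAt {u : ℂ → ℂ} {c : ℂ}
    (hu : ∀ z, HasDerivAt u (u z + c * exp z) z) (z : ℂ) : u z = (u 0 + c * z) * exp z := by
  have hψ : ∀ w, HasDerivAt (fun w => u w * exp (-w) - c * w) 0 w := fun w =>
    (((hu w).mul (hasDerivAt_neg w).cexp).sub ((hasDerivAt_id w).const_mul c)).congr_deriv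
      (by rw [exp_neg]; field_simp; ring)
  have hconst := is_const_of_deriv_eq_zero (fun w => (hψ w).differentiableAt)
    (fun w => (hψ w).deriv) z 0
  simp only [neg_zero, exp_zero, mul_one, mul_zero, sub_zero] at hconst
  rw [← hconst, exp_neg]
  field_simp
  ring

theorem exists_eq_affine_mul_exp {f : ℂ → ℂ} (hf : Differentiable ℂ f)
    (h : ∀ z, iteratedDeriv 2 f z - 2 * deriv f z + f z = 0) :
    ∃ c₁ c₂ : ℂ, ∀ z, f z = (c₁ + c₂ * z) * exp z := by
  set g := fun z => deriv f z - f z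
  have hg : ∀ z, HasDerivAt g (1 * g z) z := fun z => by
    have := (hf.hasDerivAt_iteratedDeriv 1 z).sub (hf.hasDerivAt_iteratedDeriv 0 z)
    simp only [Nat.reduceAdd, iteratedDeriv_one, iteratedDeriv_zero] at this
    exact this.congr_deriv (by linear_combination h z)
  have hg_eq z : deriv f z - f z = g 0 * exp z := by
    simpa using eq_mul_exp_sub_of_hasDerivAt (fun z => hasDerivAt_id z) hg z
  exact ⟨f 0, g 0, eq_affine_mul_exp_of_hasDerivAt fun z =>
    (hf z).hasDerivAt.congr_deriv (by linear_combination hg_eq z)⟩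

theorem iteratedDeriv_affine_mul_exp (n : ℕ) (a b : ℂ) :
    iteratedDeriv n (fun z => (a + b * z) * exp z) = fun z => (a + n * b + b * z) * exp z := by
  induction n with
  | zero => simp
  | succ n ih =>
    ext z
    rw [iteratedDeriv_succ, ih]
    exact ((((hasDerivAt_id z).const_mul b).const_add _).mul (hasDerivAt_exp z)).deriv.trans
      (by rw [id]; push_cast; ring)

end LinearODE

/-- A finite order entire function `f` solves
`f‴ − (3+e^z)f″ + (3+2e^z)f′ − (1+e^z)f = 0` iff `f(z) = (c₁ + c₂z)e^z` for some constants
`c₁, c₂ ∈ ℂ`. -/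
theorem stmt13 (f : ℂ → ℂ) (hf : Differentiable ℂ f) (hord : growthOrder f < ⊤) :
    (∀ z : ℂ, iteratedDeriv 3 f z - (3 + Complex.exp z) * iteratedDeriv 2 f z
        + (3 + 2 * Complex.exp z) * deriv f z - (1 + Complex.exp z) * f z = 0) ↔
    ∃ c₁ c₂ : ℂ, ∀ z : ℂ, f z = (c₁ + c₂ * z) * Complex.exp z := by
  refine ⟨fun hode => ?_, fun ⟨c₁, c₂, hc⟩ z => ?_⟩
  · set h := fun z => iteratedDeriv 2 f z - 2 * deriv f z + f z
    have hh' : ∀ z, HasDerivAt h ((1 + Complex.exp z) * h z) z := fun z => by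
      have := ((hf.hasDerivAt_iteratedDeriv 2 z).sub
        ((hf.hasDerivAt_iteratedDeriv 1 z).const_mul 2)).add (hf.hasDerivAt_iteratedDeriv 0 z)
      simp only [Nat.reduceAdd, iteratedDeriv_one, iteratedDeriv_zero] at this
      exact this.congr_deriv (by linear_combination hode z)
    have hh z : h z = h 0 * Complex.exp (z + Complex.exp z - 1) := by
      simpa using eq_mul_exp_sub_of_hasDerivAt
        (fun z => (hasDerivAt_id z).add (Complex.hasDerivAt_exp z)) hh' z
    obtain h0 | h0 := eq_or_ne (h 0) 0
    · exact exists_eq_affine_mul_exp hf fun z => by simpa [h0] using hh z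
    · exact absurd (growthOrder_eq_top_of_exp_exp_le (eventually_exp_exp_le_maxMod hf h0 hh))
        hord.ne
  · rw [funext hc, ← iteratedDeriv_one, iteratedDeriv_affine_mul_exp,
      iteratedDeriv_affine_mul_exp, iteratedDeriv_affine_mul_exp]
    push_cast
    ring
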